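/- A nonelementary v-critical finite simple graph G of order n with γ_R(G) = 4 is e-critical if and only if for every edge e ∈ E(G) there is a vertex v_e ∈ V(G) such that every vertex of degree n − 3 that is not adjacent to v_e (and is distinct from v_e) is an endpoint of e. -/

import Mathlib

open SimpleGraph

/-- A Roman domination function on `G`. -/
def IsRomanFn {V : Type*} (G : SimpleGraph V) (r : V → Fin 3) : Prop :=
  ∀ u, r u = 0 → ∃ v, G.Adj u v ∧ r v = 2

/-- The weight of a Roman domination function. -/
noncomputable def romanWeight {V : Type*} [Fintype V] (r : V → Fin 3) : ℕ :=
  ∑ u, (r u : ℕ)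

/-- The Roman domination number of `G`. -/
noncomputable def romanNumber {V : Type*} [Fintype V] (G : SimpleGraph V) : ℕ :=
  sInf {w | ∃ r : V → Fin 3, IsRomanFn G r ∧ romanWeight r = w}

/-- `G` is vertex critical. -/
def VCritical {V : Type*} [Fintype V] [DecidableEq V] (G : SimpleGraph V) : Prop :=
  ∀ v : V, romanNumber (G.induce {u | u ≠ v}) = romanNumber G - 1

/-- `G` is edge critical. -/
def ECritical {V : Type*} [Fintype V] [DecidableEq V] (G : SimpleGraph V) : Prop :=
  VCritical G ∧ ∀ e ∈ G.edgeSet, ¬ VCritical (G.deleteEdges {e})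

/-- `G` is Roman saturated. -/
def RomanSaturated {V : Type*} [Fintype V] (G : SimpleGraph V) : Prop :=
  ∀ v w : V, v ≠ w → ¬ G.Adj v w →
    romanNumber (G ⊔ SimpleGraph.fromEdgeSet {s(v, w)}) = romanNumber G - 1

/-- `v` is a cut vertex of `G`. -/
def IsCutVertex {V : Type*} [Fintype V] [DecidableEq V] (G : SimpleGraph V) (v : V) : Prop :=
  Nat.card G.ConnectedComponent < Nat.card (G.induce {u | u ≠ v}).ConnectedComponent

/-! Putting 2 on a vertex `w` and 1 on each of its non-neighbours is a Roman domination function,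
so in a graph with `γ_R = 4` every vertex has at least two non-neighbours, and a graph of order at
least 4 has `γ_R ≤ 3` exactly when some vertex has at most one non-neighbour.
For an edge `e ∋ x`, the graphs `G - e - x` and `G - x` coincide, so `γ_R(G - e) = 4` and `G - e`
is v-critical iff every `G - e - v` has a vertex with at most one non-neighbour. Such a vertex `w`
has exactly the two non-neighbours it has in `G`, one of them being `v`, hence degree `n - 3`
in `G` and `w ∉ e`. Negating this for each edge gives the condition of the theorem. -/

lemma ncard_sdiff_singleton_le_one_iff {α : Type*} {A B : Set α} (hB : B.Finite) (hAB : A ⊆ B)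
    (hA : 2 ≤ A.ncard) (v : α) : (B \ {v}).ncard ≤ 1 ↔ B = A ∧ v ∈ A ∧ A.ncard = 2 := by
  have hAB' := Set.ncard_le_ncard hAB hB
  constructor
  · intro h
    have hv : v ∈ B := by
      by_contra hv
      rw [Set.sdiff_singleton_eq_self hv] at h
      omega
    have := Set.ncard_sdiff_singleton_add_one hv hB
    obtain rfl := (Set.eq_of_subset_of_ncard_le hAB (by omega) hB).symm
    exact ⟨rfl, hv, by omega⟩
  · rintro ⟨rfl, hv, h2⟩
    rw [Set.ncard_sdiff_singleton_of_mem hv, h2]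

section Graph

variable {V : Type*}

lemma ncard_neighborSet_add_ncard_compl_neighborSet [Fintype V] (G : SimpleGraph V) (v : V) :
    (G.neighborSet v).ncard + (Gᶜ.neighborSet v).ncard = Fintype.card V - 1 := by
  rw [← Set.ncard_union_eq (G.compl_neighborSet_disjoint v),
    G.neighborSet_union_compl_neighborSet_eq, Set.ncard_compl, Set.ncard_singleton,
    Nat.card_eq_fintype_card]

lemma ncard_compl_neighborSet_induce_ne (H : SimpleGraph V) (v : V) (w : {u | u ≠ v}) :
    ((H.induce {u | u ≠ v})ᶜ.neighborSet w).ncard = (Hᶜ.neighborSet w \ {v}).ncard := by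
  have : (H.induce {u | u ≠ v})ᶜ.neighborSet w = Subtype.val ⁻¹' (Hᶜ.neighborSet w \ {v}) := by
    ext z
    simp [compl_adj, Subtype.ext_iff, show (z : V) ≠ v from z.2]
  rw [this, Set.ncard_preimage_of_injective_subset_range Subtype.val_injective]
  intro z hz
  exact ⟨⟨z, hz.2⟩, rfl⟩

lemma compl_neighborSet_deleteEdges_eq_iff {G : SimpleGraph V} {e : Sym2 V}
    (he : e ∈ G.edgeSet) (w : V) :
    (G.deleteEdges {e})ᶜ.neighborSet w = Gᶜ.neighborSet w ↔ w ∉ e := by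
  constructor
  · intro h hw
    obtain ⟨y, rfl⟩ := Sym2.mem_iff_exists.mp hw
    have hy : y ∈ (G.deleteEdges {s(w, y)})ᶜ.neighborSet w := by
      simp [compl_adj, deleteEdges_adj, G.ne_of_adj he]
    rw [h] at hy
    exact hy.2 he
  · intro hw
    ext z
    have : s(w, z) ≠ e := fun h => hw (h ▸ Sym2.mem_mk_left w z)
    simp [compl_adj, deleteEdges_adj, this]

lemma induce_ne_deleteEdges_of_mem (G : SimpleGraph V) {e : Sym2 V} {x : V} (hx : x ∈ e) :
    (G.deleteEdges {e}).induce {u | u ≠ x} = G.induce {u | u ≠ x} := by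
  ext a b
  have : s((a : V), b) ≠ e := fun h => by
    rcases Sym2.mem_iff.mp (h ▸ hx) with h | h
    · exact a.2 h.symm
    · exact b.2 h.symm
  simp [deleteEdges_adj, this]

end Graph

section Roman

variable {V : Type*} [Fintype V]

lemma romanNumber_le_romanWeight {H : SimpleGraph V} {r : V → Fin 3} (hr : IsRomanFn H r) :
    romanNumber H ≤ romanWeight r :=
  Nat.sInf_le ⟨r, hr, rfl⟩

lemma exists_romanWeight_eq_romanNumber (H : SimpleGraph V) :
    ∃ r : V → Fin 3, IsRomanFn H r ∧ romanWeight r = romanNumber H :=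
  Nat.sInf_mem (s := {w | ∃ r : V → Fin 3, IsRomanFn H r ∧ romanWeight r = w})
    ⟨_, fun _ => 1, fun _ h => absurd h one_ne_zero, rfl⟩

lemma romanNumber_anti {H₁ H₂ : SimpleGraph V} (h : H₁ ≤ H₂) :
    romanNumber H₂ ≤ romanNumber H₁ := by
  obtain ⟨r, hr, hw⟩ := exists_romanWeight_eq_romanNumber H₁
  exact hw ▸ romanNumber_le_romanWeight fun u hu => (hr u hu).imp fun _ hv => ⟨h hv.1, hv.2⟩

lemma romanNumber_le_two_add_ncard_compl_neighborSet (H : SimpleGraph V) (w : V) :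
    romanNumber H ≤ 2 + (Hᶜ.neighborSet w).ncard := by
  classical
  let r : V → Fin 3 := fun u => if u = w then 2 else if Hᶜ.Adj w u then 1 else 0
  have hr : IsRomanFn H r := by
    intro u hu
    refine ⟨w, ?_, by simp [r]⟩
    have huw : u ≠ w := by rintro rfl; simp [r] at hu
    have hwu : ¬Hᶜ.Adj w u := fun h => absurd hu (by simp only [r, if_neg huw, if_pos h]; decide)
    by_contra hn
    exact hwu ⟨Ne.symm huw, fun h => hn h.symm⟩
  have hsplit (u : V) :
      (r u : ℕ) = (if u = w then 2 else 0) + (if Hᶜ.Adj w u then 1 else 0) := by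
    simp only [r]
    split_ifs <;> simp_all
  have hN : Hᶜ.neighborSet w = ↑(Finset.univ.filter (Hᶜ.Adj w ·)) := by ext; simp
  refine (romanNumber_le_romanWeight hr).trans (le_of_eq ?_)
  simp only [romanWeight, hsplit, Finset.sum_add_distrib, Finset.sum_ite_eq', Finset.mem_univ,
    if_true, Finset.sum_boole, hN, Set.ncard_coe_finset, Nat.cast_id]

lemma exists_ncard_compl_neighborSet_le_one (H : SimpleGraph V) (h3 : romanNumber H ≤ 3)
    (hc : 4 ≤ Fintype.card V) : ∃ w, (Hᶜ.neighborSet w).ncard ≤ 1 := by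
  classical
  obtain ⟨r, hr, hw⟩ := exists_romanWeight_eq_romanNumber H
  have hsum (s : Finset V) : ∑ u ∈ s, (r u : ℕ) ≤ 3 :=
    (Finset.sum_le_univ_sum_of_nonneg fun _ => Nat.zero_le _).trans (hw.trans_le h3)
  obtain ⟨u, hu⟩ : ∃ u, r u = 0 := by
    by_contra! h
    have : ∑ _u : V, 1 ≤ ∑ u, (r u : ℕ) :=
      Finset.sum_le_sum fun u _ => Nat.one_le_iff_ne_zero.mpr (Fin.val_ne_zero_iff.mpr (h u))
    simp only [Finset.sum_const, Finset.card_univ, smul_eq_mul, mul_one] at this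
    linarith [hsum Finset.univ]
  obtain ⟨w, -, hw2⟩ := hr u hu
  -- a non-neighbour of `w` labelled 0 would need a second vertex labelled 2
  have hpos (z : V) (hz : Hᶜ.Adj w z) : 1 ≤ (r z : ℕ) := by
    refine Nat.one_le_iff_ne_zero.mpr (Fin.val_ne_zero_iff.mpr fun hz0 => ?_)
    obtain ⟨v, hzv, hv2⟩ := hr z hz0
    have hvw : v ≠ w := by rintro rfl; exact hz.2 hzv.symm
    have := hsum {v, w}
    rw [Finset.sum_pair hvw, hv2, hw2] at this
    exact absurd this (by decide)
  refine ⟨w, ?_⟩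
  set N := Finset.univ.filter (Hᶜ.Adj w ·)
  have hN : Hᶜ.neighborSet w = ↑N := by ext; simp [N]
  have : 2 + N.card ≤ 3 :=
    calc 2 + N.card = (r w : ℕ) + ∑ _z ∈ N, 1 := by simp [hw2]
      _ ≤ (r w : ℕ) + ∑ z ∈ N, (r z : ℕ) :=
        Nat.add_le_add_left (Finset.sum_le_sum fun z hz => hpos z (by simpa [N] using hz)) _
      _ = ∑ z ∈ insert w N, (r z : ℕ) := by rw [Finset.sum_insert (by simp [N])]
      _ ≤ 3 := hsum _
  rw [hN, Set.ncard_coe_finset]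
  omega

lemma romanNumber_le_three_iff (H : SimpleGraph V) (hc : 4 ≤ Fintype.card V) :
    romanNumber H ≤ 3 ↔ ∃ w, (Hᶜ.neighborSet w).ncard ≤ 1 :=
  ⟨fun h3 => exists_ncard_compl_neighborSet_le_one H h3 hc, fun ⟨w, hw⟩ =>
    (romanNumber_le_two_add_ncard_compl_neighborSet H w).trans (by omega)⟩

lemma romanNumber_le_romanNumber_induce_ne_add_one [DecidableEq V] (H : SimpleGraph V) (v : V) :
    romanNumber H ≤ romanNumber (H.induce {u | u ≠ v}) + 1 := by
  obtain ⟨r, hr, hw⟩ := exists_romanWeight_eq_romanNumber (H.induce {u | u ≠ v})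
  let r' : V → Fin 3 := fun u => if hu : u = v then 1 else r ⟨u, hu⟩
  have hr' : IsRomanFn H r' := by
    intro u hu
    have huv : u ≠ v := by rintro rfl; simp [r'] at hu
    obtain ⟨⟨x, hx⟩, hux, hx2⟩ := hr ⟨u, huv⟩ (by simpa [r', huv] using hu)
    exact ⟨x, hux, by simpa [r', show x ≠ v from hx] using hx2⟩
  refine (romanNumber_le_romanWeight hr').trans (le_of_eq ?_)
  rw [← hw, romanWeight, Fintype.sum_eq_add_sum_subtype_ne _ v, add_comm]
  simp only [r', dif_pos]
  congr 1
  exact Fintype.sum_congr _ _ fun x => by simp [x.2]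

end Roman

section Critical

variable {V : Type*} [Fintype V] [DecidableEq V] {G : SimpleGraph V}

lemma romanNumber_deleteEdges_eq (hv : VCritical G) (hpos : 0 < romanNumber G) (e : Sym2 V) :
    romanNumber (G.deleteEdges {e}) = romanNumber G := by
  obtain ⟨x, hx⟩ : ∃ x, x ∈ e := ⟨_, e.out_fst_mem⟩
  refine le_antisymm ?_ (romanNumber_anti (G.deleteEdges_le _))
  have := romanNumber_le_romanNumber_induce_ne_add_one (G.deleteEdges {e}) x
  rw [induce_ne_deleteEdges_of_mem G hx, hv x] at this
  omega

lemma romanNumber_deleteEdges_induce_ne_le_three_iff (h4 : romanNumber G = 4)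
    (hn : 5 ≤ Fintype.card V) {e : Sym2 V} (he : e ∈ G.edgeSet) (v : V) :
    romanNumber ((G.deleteEdges {e}).induce {u | u ≠ v}) ≤ 3 ↔
      ∃ w, w ∉ e ∧ Gᶜ.Adj w v ∧ (Gᶜ.neighborSet w).ncard = 2 := by
  rw [romanNumber_le_three_iff _ (by rw [Set.card_ne_eq]; omega), Subtype.exists]
  refine exists_congr fun w => ?_
  have hsub : Gᶜ.neighborSet w ⊆ (G.deleteEdges {e})ᶜ.neighborSet w :=
    neighborSet_mono (compl_le_compl (G.deleteEdges_le _)) w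
  have h2 : 2 ≤ (Gᶜ.neighborSet w).ncard := by
    have := romanNumber_le_two_add_ncard_compl_neighborSet G w
    omega
  simp only [Set.mem_ofPred_eq, exists_prop, ncard_compl_neighborSet_induce_ne,
    ncard_sdiff_singleton_le_one_iff (Set.toFinite _) hsub h2,
    compl_neighborSet_deleteEdges_eq_iff he, mem_neighborSet]
  exact ⟨fun ⟨_, h⟩ => h, fun h => ⟨h.2.1.ne, h⟩⟩

lemma vCritical_deleteEdges_iff (hv : VCritical G) (h4 : romanNumber G = 4)
    (hn : 5 ≤ Fintype.card V) {e : Sym2 V} (he : e ∈ G.edgeSet) :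
    VCritical (G.deleteEdges {e}) ↔
      ∀ v, ∃ w, w ∉ e ∧ Gᶜ.Adj w v ∧ (Gᶜ.neighborSet w).ncard = 2 := by
  refine forall_congr' fun v => ?_
  rw [romanNumber_deleteEdges_eq hv (by omega), h4,
    ← romanNumber_deleteEdges_induce_ne_le_three_iff h4 hn he v]
  have : 3 ≤ romanNumber ((G.deleteEdges {e}).induce {u | u ≠ v}) := by
    rw [show 3 = romanNumber (G.induce {u | u ≠ v}) by rw [hv v, h4]]
    exact romanNumber_anti fun _ _ h => G.deleteEdges_le _ h
  omega

end Critical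

/-- a nonelementary v-critical graph of order `n` with γ_R(G) = 4 is
e-critical iff for every edge `e` there is a vertex `v_e` such that every vertex of degree
`n - 3` distinct from and nonadjacent to `v_e` is an endpoint of `e`. -/
theorem eCritical_iff_degree_condition {V : Type*} [Fintype V] [DecidableEq V]
    (G : SimpleGraph V) (hne : romanNumber G < Fintype.card V) (hv : VCritical G)
    (h4 : romanNumber G = 4) :
    ECritical G ↔ ∀ e ∈ G.edgeSet, ∃ ve : V, ∀ w : V,
      (G.neighborSet w).ncard = Fintype.card V - 3 → ¬ G.Adj ve w → w ≠ ve → w ∈ e := by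
  have hn : 5 ≤ Fintype.card V := by omega
  have hdeg (w : V) :
      (G.neighborSet w).ncard = Fintype.card V - 3 ↔ (Gᶜ.neighborSet w).ncard = 2 := by
    have := ncard_neighborSet_add_ncard_compl_neighborSet G w
    omega
  rw [ECritical, and_iff_right hv]
  refine forall₂_congr fun e he => ?_
  rw [vCritical_deleteEdges_iff hv h4 hn he]
  push Not
  refine exists_congr fun v => forall_congr' fun w => ?_
  rw [hdeg, compl_adj, G.adj_comm]
  tauto
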